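/- Let T ∈ ℂ[X]_d with a decomposition T = Σ_{i=1}^r ω_i (ξ_i·X)^d where ω_i ∈ ℂ are nonzero and ξ_1,…,ξ_r ∈ ℂ^m are nonzero and span pairwise distinct lines. Suppose rank H_T^{k,d−k} = r for some k with ι(ξ_1,…,ξ_r) + 1 ≤ k ≤ d. Then T has Waring rank r and is identifiable: for any decomposition T = Σ_{i=1}^r ω'_i (ξ'_i·X)^d with ω'_i ∈ ℂ nonzero, there exist a permutation π of {1,…,r} and nonzero λ_i ∈ ℂ with ξ'_i = λ_i ξ_{π(i)} and ω'_i = λ_i^{−d} ω_{π(i)} for all i. -/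

import Mathlib

open MvPolynomial

/-- The linear form `v·X = v₁X₁ + ⋯ + vₘXₘ`. -/
noncomputable def linForm {m : ℕ} (v : Fin m → ℂ) : MvPolynomial (Fin m) ℂ :=
  ∑ i, C (v i) * X i

/-- The apolar product `⟨p,q⟩_d = Σ_{|α|=d} C(d,α) conj(p_α) q_α` of two homogeneous
polynomials of degree d, written in terms of the plain coefficients of p and q. -/
noncomputable def apolar {m : ℕ} (p q : MvPolynomial (Fin m) ℂ) : ℂ :=
  ∑ α ∈ p.support ∩ q.support,
    (starRingEnd ℂ) (MvPolynomial.coeff α p) * MvPolynomial.coeff α q /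
      (Nat.multinomial α.support α : ℂ)

/-- The monomial `X^γ`. -/
noncomputable def monomOf {m : ℕ} (γ : Fin m → ℕ) : MvPolynomial (Fin m) ℂ :=
  ∏ i, X i ^ γ i

/-- The Hankel matrix `H_T^{k,d-k}`: rows indexed by exponents α with |α| = k, columns
indexed by exponents β with |β| = d-k, entries `⟨T, X^{α+β}⟩_d`. -/
noncomputable def hankel (m d k : ℕ) (T : MvPolynomial (Fin m) ℂ) :
    Matrix (Finset.Nat.antidiagonalTuple m k) (Finset.Nat.antidiagonalTuple m (d - k)) ℂ :=
  fun α β => apolar T (monomOf ((α : Fin m → ℕ) + (β : Fin m → ℕ)))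

/-- The vector `ξ^{(k)} = (ξ^α)_{|α|=k}`. -/
noncomputable def powVec {m : ℕ} (k : ℕ) (ξ : Fin m → ℂ) :
    Finset.Nat.antidiagonalTuple m k → ℂ :=
  fun α => ∏ j, ξ j ^ (α : Fin m → ℕ) j


/-- The interpolation degree ι(Ξ) of Ξ = {ξ₁,…,ξ_r}: the smallest k for which there is a
family of homogeneous interpolation polynomials of degree k at the points Ξ. -/
noncomputable def interpolationDegree {r m : ℕ} (ξ : Fin r → Fin m → ℂ) : ℕ :=
  sInf {k | ∃ u : Fin r → MvPolynomial (Fin m) ℂ,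
    (∀ i, (u i).IsHomogeneous k) ∧
    ∀ i j, MvPolynomial.eval (ξ j) (u i) = if i = j then 1 else 0}
/- ### basic lemmas -/

lemma eval_linForm {m : ℕ} (v x : Fin m → ℂ) :
    eval x (linForm v) = ∑ i, v i * x i := by
  simp [linForm]

lemma linForm_smul {m : ℕ} (c : ℂ) (v : Fin m → ℂ) :
    linForm (c • v) = C c * linForm v := by
  simp [linForm, Finset.mul_sum, mul_assoc]

@[simp] lemma linForm_zero {m : ℕ} : linForm (0 : Fin m → ℂ) = 0 := by
  simp [linForm]

lemma linForm_ne_zero {m : ℕ} {v : Fin m → ℂ} (hv : v ≠ 0) : linForm v ≠ 0 := by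
  intro h
  apply hv
  funext t
  have := congrArg (eval (Pi.single t 1)) h
  rw [eval_linForm] at this
  simpa [Pi.single_apply, mul_ite] using this

lemma linForm_isHomogeneous {m : ℕ} (v : Fin m → ℂ) : (linForm v).IsHomogeneous 1 := by
  apply IsHomogeneous.sum
  intro i _
  simpa using (isHomogeneous_X ℂ i).C_mul (v i)

lemma multinomial_support_eq {m : ℕ} (γ : Fin m →₀ ℕ) :
    Nat.multinomial γ.support γ = Nat.multinomial Finset.univ (γ : Fin m → ℕ) := by
  unfold Nat.multinomial
  congr 1
  · congr 1
    exact Finset.sum_subset (Finset.subset_univ _)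
      (fun x _ hx => Finsupp.notMem_support_iff.mp hx)
  · exact Finset.prod_subset (Finset.subset_univ _)
      (fun x _ hx => by rw [Finsupp.notMem_support_iff.mp hx]; rfl)

lemma monomOf_eq_monomial {m : ℕ} (g : Fin m → ℕ) :
    monomOf g = monomial (Finsupp.equivFunOnFinite.symm g) (1 : ℂ) := by
  rw [← prod_X_pow_eq_monomial, monomOf]
  symm
  apply Finset.prod_subset (Finset.subset_univ _)
  intro x _ hx
  rw [Finsupp.notMem_support_iff.mp hx, pow_zero]

lemma coeff_linForm_pow {m : ℕ} (v : Fin m → ℂ) (d : ℕ) (δ : Fin m →₀ ℕ) :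
    coeff δ (linForm v ^ d) =
      if ∑ i, δ i = d then (Nat.multinomial Finset.univ (δ : Fin m → ℕ) : ℂ) * ∏ i, v i ^ δ i
      else 0 := by
  have key : ∀ g : Fin m → ℕ,
      coeff δ ((Nat.multinomial Finset.univ g : MvPolynomial (Fin m) ℂ) * ∏ i, (C (v i) * X i) ^ g i)
        = if g = ⇑δ then (Nat.multinomial Finset.univ g : ℂ) * ∏ i, v i ^ g i else 0 := by
    intro g
    have h1 : ∏ i, (C (v i) * X i) ^ g i
        = monomial (Finsupp.equivFunOnFinite.symm g) (∏ i, v i ^ g i) := by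
      simp_rw [mul_pow, ← C_pow]
      rw [Finset.prod_mul_distrib, ← map_prod, ← monomOf, monomOf_eq_monomial, C_mul_monomial,
        mul_one]
    rw [h1, ← C_eq_coe_nat, C_mul_monomial, coeff_monomial]
    by_cases hgd : g = ⇑δ
    · subst hgd; simp
    · rw [if_neg, if_neg hgd]
      intro h
      exact hgd (by rw [← h]; rfl)
  rw [linForm, Finset.sum_pow_eq_sum_piAntidiag, MvPolynomial.coeff_sum]
  simp_rw [key]
  rw [Finset.sum_ite_eq' (Finset.piAntidiag Finset.univ d) (⇑δ)]
  simp [Finset.mem_piAntidiag]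

lemma coe_symmFun {m : ℕ} (g : Fin m → ℕ) : ⇑(Finsupp.equivFunOnFinite.symm g) = g := rfl

lemma coeff_decomp {m d s : ℕ} (w : Fin s → ℂ) (η : Fin s → Fin m → ℂ) (g : Fin m → ℕ) :
    coeff (Finsupp.equivFunOnFinite.symm g) (∑ i, C (w i) * linForm (η i) ^ d) =
      if ∑ t, g t = d then
        (Nat.multinomial Finset.univ g : ℂ) * ∑ i, w i * ∏ t, η i t ^ g t
      else 0 := by
  rw [MvPolynomial.coeff_sum]
  by_cases hg : ∑ t, g t = d
  · rw [if_pos hg, Finset.mul_sum]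
    apply Finset.sum_congr rfl
    intro i _
    rw [coeff_C_mul, coeff_linForm_pow, coe_symmFun, if_pos hg]
    ring
  · rw [if_neg hg]
    apply Finset.sum_eq_zero
    intro i _
    rw [coeff_C_mul, coeff_linForm_pow, coe_symmFun, if_neg hg, mul_zero]

lemma apolar_monomial {m : ℕ} (T : MvPolynomial (Fin m) ℂ) (γ : Fin m →₀ ℕ) :
    apolar T (monomial γ (1:ℂ)) =
      (starRingEnd ℂ) (coeff γ T) / (Nat.multinomial γ.support γ : ℂ) := by
  unfold apolar
  rw [support_monomial, if_neg one_ne_zero]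
  by_cases hγ : γ ∈ T.support
  · rw [Finset.inter_singleton_of_mem hγ, Finset.sum_singleton, coeff_monomial, if_pos rfl,
      mul_one]
  · rw [Finset.inter_singleton_of_notMem hγ, Finset.sum_empty,
      MvPolynomial.notMem_support_iff.mp hγ, map_zero, zero_div]

lemma hankel_apply {m d k s : ℕ} (hkd : k ≤ d) (w : Fin s → ℂ) (η : Fin s → Fin m → ℂ)
    (α : Finset.Nat.antidiagonalTuple m k) (β : Finset.Nat.antidiagonalTuple m (d-k)) :
    hankel m d k (∑ i, C (w i) * linForm (η i) ^ d) α β =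
      ∑ i, (starRingEnd ℂ) (w i) * (powVec k (fun t => (starRingEnd ℂ) (η i t)) α *
        powVec (d-k) (fun t => (starRingEnd ℂ) (η i t)) β) := by
  have hα : ∑ t, (α : Fin m → ℕ) t = k := (Finset.Nat.mem_antidiagonalTuple).mp α.2
  have hβ : ∑ t, (β : Fin m → ℕ) t = d - k := (Finset.Nat.mem_antidiagonalTuple).mp β.2
  have hgsum : ∑ t, ((α : Fin m → ℕ) + (β : Fin m → ℕ)) t = d := by
    simp only [Pi.add_apply, Finset.sum_add_distrib, hα, hβ]; omega
  have hmult : ((Nat.multinomial Finset.univ ((α : Fin m → ℕ) + (β : Fin m → ℕ))) : ℂ) ≠ 0 := by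
    exact_mod_cast Nat.cast_ne_zero.mpr (Nat.multinomial_pos _ _).ne'
  simp only [hankel]
  rw [monomOf_eq_monomial, apolar_monomial, multinomial_support_eq, coe_symmFun, coeff_decomp,
    if_pos hgsum, map_mul, map_natCast, mul_div_assoc, mul_comm,
    div_mul_cancel₀ _ hmult, map_sum]
  apply Finset.sum_congr rfl
  intro i _
  rw [map_mul, map_prod]
  unfold powVec
  rw [← Finset.prod_mul_distrib]
  congr 1
  apply Finset.prod_congr rfl
  intro t _
  rw [Pi.add_apply, pow_add, map_mul, map_pow, map_pow]

lemma range_le_span {m d k s : ℕ} (hkd : k ≤ d) (w : Fin s → ℂ) (η : Fin s → Fin m → ℂ)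
    (T : MvPolynomial (Fin m) ℂ) (hT : T = ∑ i, C (w i) * linForm (η i) ^ d) :
    LinearMap.range (hankel m d k T).mulVecLin ≤
      Submodule.span ℂ (Set.range fun i => powVec k (fun t => (starRingEnd ℂ) (η i t))) := by
  rintro _ ⟨x, rfl⟩
  have hx : (hankel m d k T).mulVecLin x =
      ∑ i, ((starRingEnd ℂ) (w i) *
          ∑ β, powVec (d-k) (fun t => (starRingEnd ℂ) (η i t)) β * x β) •
        powVec k (fun t => (starRingEnd ℂ) (η i t)) := by
    funext α
    rw [Matrix.mulVecLin_apply]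
    show ∑ β, hankel m d k T α β * x β = _
    subst hT
    simp only [hankel_apply hkd w η, Finset.sum_apply, Pi.smul_apply, smul_eq_mul,
      Finset.sum_mul, Finset.mul_sum]
    rw [Finset.sum_comm]
    apply Finset.sum_congr rfl
    intro i _
    apply Finset.sum_congr rfl
    intro β _
    ring
  rw [hx]
  exact Submodule.sum_mem _ fun i _ =>
    Submodule.smul_mem _ _ (Submodule.subset_span ⟨i, rfl⟩)

lemma rank_le_decomp {m d k s : ℕ} (hkd : k ≤ d) (w : Fin s → ℂ) (η : Fin s → Fin m → ℂ)
    (T : MvPolynomial (Fin m) ℂ) (hT : T = ∑ i, C (w i) * linForm (η i) ^ d) :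
    (hankel m d k T).rank ≤ s := by
  have h1 := range_le_span hkd w η T hT
  have h2 : Submodule.span ℂ (Set.range fun i => powVec k (fun t => (starRingEnd ℂ) (η i t)))
      = Submodule.span ℂ ((Finset.univ.image
          (fun i => powVec k (fun t => (starRingEnd ℂ) (η i t)))) : Set _) := by
    rw [Finset.coe_image, Finset.coe_univ, Set.image_univ]
  calc (hankel m d k T).rank
      = Module.finrank ℂ (LinearMap.range (hankel m d k T).mulVecLin) := rfl
    _ ≤ Module.finrank ℂ (Submodule.span ℂ (Set.range
          fun i => powVec k (fun t => (starRingEnd ℂ) (η i t)))) := Submodule.finrank_mono h1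
    _ ≤ (Finset.univ.image (fun i => powVec k (fun t => (starRingEnd ℂ) (η i t)))).card := by
        rw [h2]; exact finrank_span_finset_le_card _
    _ ≤ (Finset.univ : Finset (Fin s)).card := Finset.card_image_le
    _ = s := by simp

lemma decomp_of_erase {m d r : ℕ} (T : MvPolynomial (Fin m) ℂ) (i : Fin r)
    (w : Fin r → ℂ) (η : Fin r → Fin m → ℂ)
    (hT : T = ∑ l ∈ Finset.univ.erase i, C (w l) * linForm (η l) ^ d) :
    ∃ (w' : Fin (r-1) → ℂ) (η' : Fin (r-1) → Fin m → ℂ),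
      T = ∑ x, C (w' x) * linForm (η' x) ^ d := by
  have hcard : Fintype.card ↥(Finset.univ.erase i) = r - 1 := by
    rw [Fintype.card_coe, Finset.card_erase_of_mem (Finset.mem_univ i), Finset.card_univ,
      Fintype.card_fin]
  let e : Fin (r-1) ≃ ↥(Finset.univ.erase i) := (Fintype.equivFinOfCardEq hcard).symm
  refine ⟨fun x => w (e x), fun x => η (e x), ?_⟩
  rw [hT, ← Finset.sum_coe_sort (Finset.univ.erase i)]
  exact (Equiv.sum_comp e (fun y => C (w y.1) * linForm (η y.1) ^ d)).symm

lemma apply_eq_sum {m : ℕ} (f : (Fin m → ℂ) →ₗ[ℂ] ℂ) (y : Fin m → ℂ) :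
    f y = ∑ t, y t * f (Pi.single t 1) := by
  conv_lhs => rw [pi_eq_sum_univ y]
  rw [map_sum]
  apply Finset.sum_congr rfl
  intro t _
  rw [map_smul, smul_eq_mul]
  exact congrArg (fun z => y t * f z) (by funext j; simp [Pi.single_apply, eq_comm])

lemma exists_sep {m : ℕ} {x y : Fin m → ℂ} (h : ∀ c : ℂ, x ≠ c • y) :
    ∃ w : Fin m → ℂ, (∑ t, w t * y t = 0 ∧ ∑ t, w t * x t ≠ 0) := by
  have hx : x ∉ Submodule.span ℂ {y} := by
    rw [Submodule.mem_span_singleton]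
    rintro ⟨c, hc⟩
    exact h c hc.symm
  obtain ⟨f, hfx, hfb⟩ := Submodule.exists_dual_map_eq_bot_of_notMem hx inferInstance
  refine ⟨fun t => f (Pi.single t 1), ?_, ?_⟩
  · have hy : f y = 0 := by
      have hmem : f y ∈ Submodule.map f (Submodule.span ℂ {y}) :=
        Submodule.mem_map_of_mem (Submodule.mem_span_singleton_self y)
      rw [hfb] at hmem
      simpa using hmem
    rw [← hy, apply_eq_sum]
    apply Finset.sum_congr rfl
    intro t _
    ring
  · have : f x = ∑ t, x t * f (Pi.single t 1) := apply_eq_sum f x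
    intro hc
    apply hfx
    rw [this, ← hc]
    apply Finset.sum_congr rfl
    intro t _
    ring

lemma exists_w {r m : ℕ} (ξ : Fin r → Fin m → ℂ) (hξ0 : ∀ j, ξ j ≠ 0) :
    ∃ wv : Fin m → ℂ, ∀ j, eval (ξ j) (linForm wv) ≠ 0 := by
  by_contra hcon
  push_neg at hcon
  have hP : (∏ j, linForm (ξ j)) ≠ 0 :=
    Finset.prod_ne_zero_iff.mpr fun j _ => linForm_ne_zero (hξ0 j)
  apply hP
  have : (∏ j, linForm (ξ j)) = (0 : MvPolynomial (Fin m) ℂ) := by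
    apply MvPolynomial.funext
    intro x
    obtain ⟨j, hj⟩ := hcon x
    rw [map_prod, map_zero]
    apply Finset.prod_eq_zero (Finset.mem_univ j)
    rw [eval_linForm] at hj ⊢
    rw [← hj]
    apply Finset.sum_congr rfl
    intro t _
    ring
  exact this

lemma interp_nonempty {r m : ℕ} (ξ : Fin r → Fin m → ℂ) (hξ0 : ∀ i, ξ i ≠ 0)
    (hlines : ∀ i j, i ≠ j → ∀ c : ℂ, ξ i ≠ c • ξ j) :
    ∃ u : Fin r → MvPolynomial (Fin m) ℂ, (∀ i, (u i).IsHomogeneous (r-1)) ∧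
      ∀ i j, eval (ξ j) (u i) = if i = j then 1 else 0 := by
  have hsep : ∀ i j : Fin r, ∃ w : Fin m → ℂ,
      (i ≠ j → (∑ t, w t * ξ j t = 0 ∧ ∑ t, w t * ξ i t ≠ 0)) := by
    intro i j
    by_cases hij : i = j
    · exact ⟨0, fun h => absurd hij h⟩
    · obtain ⟨w, hw⟩ := exists_sep (hlines i j hij)
      exact ⟨w, fun _ => hw⟩
  choose W hW using hsep
  set v : Fin r → MvPolynomial (Fin m) ℂ :=
    fun i => ∏ j ∈ Finset.univ.erase i, linForm (W i j) with hv
  have heval : ∀ i l, eval (ξ l) (v i) = ∏ j ∈ Finset.univ.erase i, ∑ t, W i j t * ξ l t := by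
    intro i l
    rw [hv, map_prod]
    apply Finset.prod_congr rfl
    intro j _
    rw [eval_linForm]
  have hne : ∀ i, eval (ξ i) (v i) ≠ 0 := by
    intro i
    rw [heval]
    apply Finset.prod_ne_zero_iff.mpr
    intro j hj
    exact (hW i j (Finset.ne_of_mem_erase hj).symm).2
  have hzero : ∀ i l, i ≠ l → eval (ξ l) (v i) = 0 := by
    intro i l hil
    rw [heval]
    apply Finset.prod_eq_zero (Finset.mem_erase.mpr ⟨hil.symm, Finset.mem_univ l⟩)
    exact (hW i l hil).1
  refine ⟨fun i => C ((eval (ξ i) (v i))⁻¹) * v i, ?_, ?_⟩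
  · intro i
    have hh : (v i).IsHomogeneous (r-1) := by
      have := MvPolynomial.IsHomogeneous.prod (Finset.univ.erase i)
        (fun j => linForm (W i j)) (fun _ => 1) (fun j _ => linForm_isHomogeneous _)
      rwa [Finset.sum_const, Finset.card_erase_of_mem (Finset.mem_univ i), Finset.card_univ,
        Fintype.card_fin, smul_eq_mul, mul_one] at this
    exact hh.C_mul _
  · intro i j
    rw [map_mul, eval_C]
    by_cases hij : i = j
    · subst hij
      rw [if_pos rfl, inv_mul_cancel₀ (hne i)]
    · rw [if_neg hij, hzero i j hij, mul_zero]

lemma interp_at {r m : ℕ} (ξ : Fin r → Fin m → ℂ) (hξ0 : ∀ i, ξ i ≠ 0)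
    (hlines : ∀ i j, i ≠ j → ∀ c : ℂ, ξ i ≠ c • ξ j) {n : ℕ}
    (hn : interpolationDegree ξ ≤ n) :
    ∃ u : Fin r → MvPolynomial (Fin m) ℂ, (∀ i, (u i).IsHomogeneous n) ∧
      ∀ i j, eval (ξ j) (u i) = if i = j then 1 else 0 := by
  have hne : {k | ∃ u : Fin r → MvPolynomial (Fin m) ℂ,
      (∀ i, (u i).IsHomogeneous k) ∧
      ∀ i j, MvPolynomial.eval (ξ j) (u i) = if i = j then 1 else 0}.Nonempty :=
    ⟨r - 1, interp_nonempty ξ hξ0 hlines⟩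
  obtain ⟨u, hu, huval⟩ := Nat.sInf_mem hne
  obtain ⟨wv, hwv⟩ := exists_w ξ hξ0
  set t := interpolationDegree ξ with ht
  refine ⟨fun i => C (((eval (ξ i) (linForm wv)) ^ (n - t))⁻¹) * (u i * linForm wv ^ (n - t)),
    ?_, ?_⟩
  · intro i
    have h1 : (u i * linForm wv ^ (n - t)).IsHomogeneous (t + 1 * (n - t)) :=
      (hu i).mul ((linForm_isHomogeneous wv).pow (n - t))
    have h2 : t + 1 * (n - t) = n := by
      rw [one_mul]
      omega
    rw [h2] at h1
    exact h1.C_mul _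
  · intro i j
    rw [map_mul, eval_C, map_mul, map_pow, huval i j]
    by_cases hij : i = j
    · subst hij
      rw [if_pos rfl, one_mul, inv_mul_cancel₀ (pow_ne_zero _ (hwv i))]
    · rw [if_neg hij, zero_mul, mul_zero]

lemma homog_eval_transfer {m n s : ℕ} {η : Fin m → ℂ} {c : Fin s → ℂ} {ζ : Fin s → Fin m → ℂ}
    (h : ∀ α : Finset.Nat.antidiagonalTuple m n, powVec n η α = ∑ i, c i * powVec n (ζ i) α)
    {p : MvPolynomial (Fin m) ℂ} (hp : p.IsHomogeneous n) :
    eval η p = ∑ i, c i * eval (ζ i) p := by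
  have hsup : ∀ γ ∈ p.support, ∑ t, (γ : Fin m → ℕ) t = n := by
    intro γ hγ
    have h1 : (Finsupp.weight 1) γ = n := hp (MvPolynomial.mem_support_iff.mp hγ)
    change Finsupp.weight (fun _ => 1) γ = n at h1
    rw [← Finsupp.degree_eq_weight_one] at h1
    rw [← h1, Finsupp.degree_apply]
    symm
    exact Finset.sum_subset (Finset.subset_univ _)
      (fun x _ hx => Finsupp.notMem_support_iff.mp hx)
  have hterm : ∀ γ ∈ p.support, coeff γ p * ∏ tt, η tt ^ γ tt
      = ∑ i, c i * (coeff γ p * ∏ tt, ζ i tt ^ γ tt) := by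
    intro γ hγ
    have hmem : (⇑γ : Fin m → ℕ) ∈ Finset.Nat.antidiagonalTuple m n :=
      Finset.Nat.mem_antidiagonalTuple.mpr (hsup γ hγ)
    have h2 : (∏ tt, η tt ^ γ tt) = ∑ i, c i * ∏ tt, ζ i tt ^ γ tt := h ⟨⇑γ, hmem⟩
    rw [h2, Finset.mul_sum]
    apply Finset.sum_congr rfl
    intro i _
    ring
  rw [eval_eq', Finset.sum_congr rfl hterm, Finset.sum_comm]
  apply Finset.sum_congr rfl
  intro i _
  rw [eval_eq', Finset.mul_sum]

lemma finrank_span_range_le {s : ℕ} {V : Type*} [AddCommGroup V] [Module ℂ V]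
    (f : Fin s → V) :
    Module.finrank ℂ (Submodule.span ℂ (Set.range f)) ≤ s := by
  classical
  rw [show Set.range f = ↑(Finset.univ.image f) by
    rw [Finset.coe_image, Finset.coe_univ, Set.image_univ]]
  refine le_trans (finrank_span_finset_le_card _) (le_trans Finset.card_image_le ?_)
  simp

lemma star_powVec {m k : ℕ} (η : Fin m → ℂ) (α : Finset.Nat.antidiagonalTuple m k) :
    (starRingEnd ℂ) (powVec k (fun t => (starRingEnd ℂ) (η t)) α) = powVec k η α := by
  unfold powVec
  rw [map_prod]
  apply Finset.prod_congr rfl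
  intro t _
  rw [map_pow, Complex.conj_conj]

lemma homog_eval_zero {m n s : ℕ} {c : Fin s → ℂ} {ζ : Fin s → Fin m → ℂ}
    (h : ∀ α : Finset.Nat.antidiagonalTuple m n, ∑ i, c i * powVec n (ζ i) α = 0)
    {p : MvPolynomial (Fin m) ℂ} (hp : p.IsHomogeneous n) :
    ∑ i, c i * eval (ζ i) p = 0 := by
  have hsup : ∀ γ ∈ p.support, ∑ t, (γ : Fin m → ℕ) t = n := by
    intro γ hγ
    have h1 : (Finsupp.weight 1) γ = n := hp (MvPolynomial.mem_support_iff.mp hγ)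
    change Finsupp.weight (fun _ => 1) γ = n at h1
    rw [← Finsupp.degree_eq_weight_one] at h1
    rw [← h1, Finsupp.degree_apply]
    symm
    exact Finset.sum_subset (Finset.subset_univ _)
      (fun x _ hx => Finsupp.notMem_support_iff.mp hx)
  have hswap : ∑ i, c i * eval (ζ i) p
      = ∑ γ ∈ p.support, coeff γ p * ∑ i, c i * ∏ tt, ζ i tt ^ γ tt := by
    simp_rw [eval_eq', Finset.mul_sum]
    rw [Finset.sum_comm]
    apply Finset.sum_congr rfl
    intro γ _
    apply Finset.sum_congr rfl
    intro i _
    ring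
  rw [hswap]
  apply Finset.sum_eq_zero
  intro γ hγ
  have hmem : (⇑γ : Fin m → ℕ) ∈ Finset.Nat.antidiagonalTuple m n :=
    Finset.Nat.mem_antidiagonalTuple.mpr (hsup γ hγ)
  have h2 : ∑ i, c i * ∏ tt, ζ i tt ^ γ tt = 0 := h ⟨⇑γ, hmem⟩
  rw [h2, mul_zero]

/-- if T = Σ ω_i (ξ_i·X)^d with nonzero ω_i, nonzero ξ_i spanning pairwise
distinct lines, and rank H_T^{k,d-k} = r for some k with ι(Ξ)+1 ≤ k ≤ d, then T has
Waring rank r and is identifiable: any r-term decomposition with nonzero weights agrees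
with the given one up to permutation and scaling. -/
theorem statement_17 (m d k r : ℕ)
    (ω : Fin r → ℂ) (hω : ∀ i, ω i ≠ 0)
    (ξ : Fin r → Fin m → ℂ) (hξ0 : ∀ i, ξ i ≠ 0)
    (hlines : ∀ i j, i ≠ j → ∀ c : ℂ, ξ i ≠ c • ξ j)
    (T : MvPolynomial (Fin m) ℂ) (hT : T = ∑ i, C (ω i) * linForm (ξ i) ^ d)
    (hk1 : interpolationDegree ξ + 1 ≤ k) (hkd : k ≤ d)
    (hrank : (hankel m d k T).rank = r) :
    (∀ r' : ℕ, r' < r →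
      ¬ ∃ (ω' : Fin r' → ℂ) (ξ' : Fin r' → Fin m → ℂ),
          T = ∑ i, C (ω' i) * linForm (ξ' i) ^ d) ∧
    ∀ (ω' : Fin r → ℂ) (ξ' : Fin r → Fin m → ℂ), (∀ i, ω' i ≠ 0) →
      T = ∑ i, C (ω' i) * linForm (ξ' i) ^ d →
      ∃ (π : Equiv.Perm (Fin r)) (lam : Fin r → ℂ),
        ∀ i, lam i ≠ 0 ∧ ξ' i = lam i • ξ (π i) ∧
          ω' i = (lam i) ^ (-(d : ℤ)) * ω (π i) := by
  have hk0 : 1 ≤ k := le_trans (Nat.le_add_left 1 _) hk1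
  have hd0 : 1 ≤ d := le_trans hk0 hkd
  have part1 : ∀ r' : ℕ, r' < r →
      ¬ ∃ (ω' : Fin r' → ℂ) (ξ' : Fin r' → Fin m → ℂ),
          T = ∑ i, C (ω' i) * linForm (ξ' i) ^ d := by
    rintro r' hr' ⟨w', η', hT'⟩
    have := rank_le_decomp hkd w' η' T hT'
    omega
  refine ⟨part1, ?_⟩
  intro ω' ξ' hω' hT'
  -- every ξ' j is nonzero
  have hξ'0 : ∀ j, ξ' j ≠ 0 := by
    intro j hj0
    apply part1 (r-1) (Nat.sub_lt j.pos one_pos)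
    apply decomp_of_erase T j ω' ξ'
    rw [hT', ← Finset.add_sum_erase _ _ (Finset.mem_univ j), hj0, linForm_zero,
      zero_pow (by omega : d ≠ 0), mul_zero, zero_add]
  -- ξ' spans pairwise distinct lines
  have hlines' : ∀ i j, i ≠ j → ∀ c : ℂ, ξ' i ≠ c • ξ' j := by
    intro i j hij c hc
    apply part1 (r-1) (Nat.sub_lt j.pos one_pos)
    apply decomp_of_erase T i (Function.update ω' j (ω' j + ω' i * c ^ d)) ξ'
    have hj_mem : j ∈ Finset.univ.erase i := Finset.mem_erase.mpr ⟨hij.symm, Finset.mem_univ j⟩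
    have hLi : linForm (ξ' i) ^ d = C (c ^ d) * linForm (ξ' j) ^ d := by
      rw [hc, linForm_smul, mul_pow, ← C_pow]
    rw [hT', ← Finset.add_sum_erase _ (fun l => C (ω' l) * linForm (ξ' l) ^ d)
        (Finset.mem_univ i),
      ← Finset.add_sum_erase _ (fun l => C (Function.update ω' j (ω' j + ω' i * c ^ d) l)
        * linForm (ξ' l) ^ d) hj_mem,
      ← Finset.add_sum_erase _ (fun l => C (ω' l) * linForm (ξ' l) ^ d) hj_mem]
    have hsum_congr : ∑ l ∈ (Finset.univ.erase i).erase j,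
        C (Function.update ω' j (ω' j + ω' i * c ^ d) l) * linForm (ξ' l) ^ d
        = ∑ l ∈ (Finset.univ.erase i).erase j, C (ω' l) * linForm (ξ' l) ^ d := by
      apply Finset.sum_congr rfl
      intro l hl
      rw [Function.update_of_ne (Finset.ne_of_mem_erase hl)]
    rw [hsum_congr, Function.update_self, hLi, map_add, map_mul]
    ring
  -- span membership: each powVec k (ξ' j) is in the span of the powVec k (ξ i)
  have hrange : LinearMap.range (hankel m d k T).mulVecLin ≤
      Submodule.span ℂ (Set.range fun i => powVec k (fun t => (starRingEnd ℂ) (ξ i t))) :=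
    range_le_span hkd ω ξ T hT
  have hrange' : LinearMap.range (hankel m d k T).mulVecLin ≤
      Submodule.span ℂ (Set.range fun i => powVec k (fun t => (starRingEnd ℂ) (ξ' i t))) :=
    range_le_span hkd ω' ξ' T hT'
  have heq : LinearMap.range (hankel m d k T).mulVecLin =
      Submodule.span ℂ (Set.range fun i => powVec k (fun t => (starRingEnd ℂ) (ξ' i t))) := by
    apply Submodule.eq_of_le_of_finrank_le hrange'
    have h2 : Module.finrank ℂ (LinearMap.range (hankel m d k T).mulVecLin) = r := hrank
    rw [h2]
    exact finrank_span_range_le _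
  have hmem : ∀ j, ∃ c : Fin r → ℂ,
      ∀ α : Finset.Nat.antidiagonalTuple m k,
        powVec k (ξ' j) α = ∑ i, c i * powVec k (ξ i) α := by
    intro j
    have h1 : powVec k (fun t => (starRingEnd ℂ) (ξ' j t)) ∈
        Submodule.span ℂ (Set.range fun i => powVec k (fun t => (starRingEnd ℂ) (ξ i t))) := by
      apply hrange
      rw [heq]
      exact Submodule.subset_span (Set.mem_range_self j)
    obtain ⟨c0, hc0⟩ := (Submodule.mem_span_range_iff_exists_fun ℂ).mp h1
    refine ⟨fun i => (starRingEnd ℂ) (c0 i), fun α => ?_⟩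
    have h2 := congrFun hc0 α
    simp only [Finset.sum_apply, Pi.smul_apply, smul_eq_mul] at h2
    have h3 := congrArg (starRingEnd ℂ) h2
    rw [map_sum, star_powVec] at h3
    rw [← h3]
    apply Finset.sum_congr rfl
    intro i _
    rw [map_mul, star_powVec]
  -- interpolation family of degree k-1
  obtain ⟨u, hu_hom, hu_val⟩ := interp_at ξ hξ0 hlines
    (by omega : interpolationDegree ξ ≤ k - 1)
  -- each ξ' j is proportional to some ξ i
  have hprop : ∀ j, ∃ (i : Fin r) (lam : ℂ), lam ≠ 0 ∧ ξ' j = lam • ξ i := by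
    intro j
    obtain ⟨c, hc⟩ := hmem j
    have hkey : ∀ i (t : Fin m), eval (ξ' j) (u i) * ξ' j t = c i * ξ i t := by
      intro i t
      have hp : ((u i) * X t).IsHomogeneous k := by
        have h4 := (hu_hom i).mul (isHomogeneous_X ℂ t)
        rwa [Nat.sub_add_cancel hk0] at h4
      have h5 := homog_eval_transfer hc hp
      rw [map_mul, eval_X] at h5
      rw [h5, Finset.sum_eq_single i]
      · rw [map_mul, eval_X, hu_val i i, if_pos rfl, one_mul]
      · intro l _ hl
        rw [map_mul, eval_X, hu_val i l, if_neg (Ne.symm hl), zero_mul, mul_zero]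
      · intro hni
        exact absurd (Finset.mem_univ i) hni
    by_cases hcase : ∃ i, eval (ξ' j) (u i) ≠ 0
    · obtain ⟨i, hi⟩ := hcase
      refine ⟨i, c i / eval (ξ' j) (u i), ?_, ?_⟩
      · intro h0
        apply hξ'0 j
        have hci : c i = 0 := by
          rcases div_eq_zero_iff.mp h0 with h | h
          · exact h
          · exact absurd h hi
        funext t
        have h6 := hkey i t
        rw [hci, zero_mul] at h6
        exact (mul_eq_zero.mp h6).resolve_left hi
      · funext t
        rw [Pi.smul_apply, smul_eq_mul, div_mul_eq_mul_div, ← hkey i t,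
          mul_comm (eval (ξ' j) (u i)) (ξ' j t), mul_div_assoc, div_self hi, mul_one]
    · exfalso
      push_neg at hcase
      have hc0 : ∀ l, c l = 0 := by
        intro l
        obtain ⟨t, ht⟩ : ∃ t, ξ l t ≠ 0 := by
          by_contra hh
          push_neg at hh
          exact hξ0 l (funext fun t => hh t)
        have h7 := hkey l t
        rw [hcase l, zero_mul] at h7
        rcases mul_eq_zero.mp h7.symm with h | h
        · exact h
        · exact absurd h ht
      obtain ⟨t0, ht0⟩ : ∃ t, ξ' j t ≠ 0 := by
        by_contra hh
        push_neg at hh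
        exact hξ'0 j (funext fun t => hh t)
      have hα0 : (fun t => if t = t0 then k else 0) ∈ Finset.Nat.antidiagonalTuple m k :=
        Finset.Nat.mem_antidiagonalTuple.mpr (by simp)
      have h8 := hc ⟨_, hα0⟩
      simp only [hc0, zero_mul, Finset.sum_const_zero] at h8
      have hval : powVec k (ξ' j) ⟨_, hα0⟩ = ξ' j t0 ^ k := by
        show ∏ t, ξ' j t ^ (if t = t0 then k else 0) = _
        rw [Finset.prod_eq_single t0]
        · rw [if_pos rfl]
        · intro t _ htne
          rw [if_neg htne, pow_zero]
        · intro hni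
          exact absurd (Finset.mem_univ t0) hni
      rw [hval] at h8
      exact pow_ne_zero k ht0 h8
  choose π0 lam hlam0 hprop_eq using hprop
  have hinj : Function.Injective π0 := by
    intro j1 j2 h12
    by_contra hne
    apply hlines' j1 j2 hne (lam j1 / lam j2)
    rw [hprop_eq j1, hprop_eq j2, h12, smul_smul, div_mul_cancel₀ _ (hlam0 j2)]
  let π : Equiv.Perm (Fin r) := Equiv.ofBijective π0 (Finite.injective_iff_bijective.mp hinj)
  have hπ : ∀ j, π j = π0 j := fun j => rfl
  -- power sums agree, hence weights match
  obtain ⟨wv, hwv⟩ := exists_w ξ hξ0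
  have hps : ∀ α : Finset.Nat.antidiagonalTuple m d,
      ∑ i, (ω' (π.symm i) * lam (π.symm i) ^ d - ω i) * powVec d (ξ i) α = 0 := by
    intro α
    have hαd : ∑ t, (α : Fin m → ℕ) t = d := Finset.Nat.mem_antidiagonalTuple.mp α.2
    have multne : ((Nat.multinomial Finset.univ ((α : Fin m → ℕ))) : ℂ) ≠ 0 :=
      Nat.cast_ne_zero.mpr (Nat.multinomial_pos _ _).ne'
    have h1 := coeff_decomp (d := d) ω ξ (α : Fin m → ℕ)
    have h2 := coeff_decomp (d := d) ω' ξ' (α : Fin m → ℕ)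
    rw [← hT, if_pos hαd] at h1
    rw [← hT', if_pos hαd] at h2
    have hsum_eq : ∑ i, ω i * ∏ t, ξ i t ^ (α : Fin m → ℕ) t
        = ∑ i, ω' i * ∏ t, ξ' i t ^ (α : Fin m → ℕ) t :=
      mul_left_cancel₀ multne (h1.symm.trans h2)
    have hξ'pow : ∀ i, ∏ t, ξ' i t ^ (α : Fin m → ℕ) t
        = lam i ^ d * ∏ t, ξ (π0 i) t ^ (α : Fin m → ℕ) t := by
      intro i
      rw [hprop_eq i]
      have : ∀ t, (lam i • ξ (π0 i)) t ^ (α : Fin m → ℕ) t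
          = lam i ^ (α : Fin m → ℕ) t * ξ (π0 i) t ^ (α : Fin m → ℕ) t := by
        intro t
        rw [Pi.smul_apply, smul_eq_mul, mul_pow]
      rw [Finset.prod_congr rfl (fun t _ => this t), Finset.prod_mul_distrib,
        Finset.prod_pow_eq_pow_sum, hαd]
    have hreindex : ∑ i, ω' i * ∏ t, ξ' i t ^ (α : Fin m → ℕ) t
        = ∑ i, ω' (π.symm i) * lam (π.symm i) ^ d * ∏ t, ξ i t ^ (α : Fin m → ℕ) t := by
      rw [← Equiv.sum_comp π (fun i => ω' (π.symm i) * lam (π.symm i) ^ d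
        * ∏ t, ξ i t ^ (α : Fin m → ℕ) t)]
      apply Finset.sum_congr rfl
      intro i _
      rw [Equiv.symm_apply_apply, hξ'pow i, hπ]
      ring
    simp only [sub_mul]
    rw [Finset.sum_sub_distrib]
    apply sub_eq_zero_of_eq
    have hpv : ∀ (η : Fin m → ℂ), powVec d η α = ∏ t, η t ^ (α : Fin m → ℕ) t := fun _ => rfl
    simp only [hpv]
    rw [← hreindex, ← hsum_eq]
  have hwzero : ∀ i, ω' (π.symm i) * lam (π.symm i) ^ d = ω i := by
    intro i
    have hp : ((u i) * linForm wv ^ (d - k + 1)).IsHomogeneous d := by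
      have h4 := (hu_hom i).mul ((linForm_isHomogeneous wv).pow (d - k + 1))
      rwa [show k - 1 + 1 * (d - k + 1) = d by omega] at h4
    have h5 := homog_eval_zero hps hp
    rw [Finset.sum_eq_single i] at h5
    · rw [map_mul, map_pow, hu_val i i, if_pos rfl, one_mul] at h5
      have := pow_ne_zero (d - k + 1) (hwv i)
      have h6 := (mul_eq_zero.mp h5).resolve_right this
      exact sub_eq_zero.mp h6
    · intro l _ hl
      rw [map_mul, hu_val i l, if_neg (Ne.symm hl), zero_mul, mul_zero]
    · intro hni
      exact absurd (Finset.mem_univ i) hni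
  refine ⟨π, lam, fun j => ⟨hlam0 j, by rw [hπ]; exact hprop_eq j, ?_⟩⟩
  have h9 : ω' j * lam j ^ d = ω (π j) := by
    have := hwzero (π j)
    rwa [Equiv.symm_apply_apply] at this
  rw [zpow_neg, zpow_natCast, ← h9, mul_comm (ω' j), inv_mul_cancel_left₀
    (pow_ne_zero d (hlam0 j))]
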